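/- In ℤ[√2], up to multiplication by squares of units, the only indecomposable totally positive integers are 1 and 2+√2. Equivalently: every indecomposable totally positive element of ℤ[√2] is of the form ε²·1 or ε²·(2+√2) for some unit ε ∈ ℤ[√2]^×. -/

import Mathlib

/-- `x ∈ ℤ[√2]` is totally positive: positive under both real embeddings. -/
noncomputable def TotPos2 (x : ℤ√2) : Prop :=
  0 < (x.re : ℝ) + x.im * Real.sqrt 2 ∧ 0 < (x.re : ℝ) - x.im * Real.sqrt 2

/-- A totally positive `α ∈ ℤ[√2]` is indecomposable: not a sum of two totally
positive elements of `ℤ[√2]`. -/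
noncomputable def Indec2 (α : ℤ√2) : Prop :=
  ¬ ∃ β γ : ℤ√2, TotPos2 β ∧ TotPos2 γ ∧ β + γ = α

namespace Stmt19Aux

noncomputable def fE (x : ℤ√2) : ℝ := x.re + x.im * Real.sqrt 2
noncomputable def gE (x : ℤ√2) : ℝ := x.re - x.im * Real.sqrt 2

lemma s_sq : Real.sqrt 2 ^ 2 = 2 := Real.sq_sqrt (by norm_num)
lemma s_pos : 0 < Real.sqrt 2 := Real.sqrt_pos.2 (by norm_num)

lemma totPos_iff (x : ℤ√2) : TotPos2 x ↔ 0 < fE x ∧ 0 < gE x := Iff.rfl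

lemma fE_mul (x y : ℤ√2) : fE (x * y) = fE x * fE y := by
  simp only [fE, Zsqrtd.re_mul, Zsqrtd.im_mul]
  push_cast
  linear_combination (-(x.im : ℝ) * y.im) * s_sq

lemma gE_mul (x y : ℤ√2) : gE (x * y) = gE x * gE y := by
  simp only [gE, Zsqrtd.re_mul, Zsqrtd.im_mul]
  push_cast
  linear_combination (-(x.im : ℝ) * y.im) * s_sq

lemma fE_add (x y : ℤ√2) : fE (x + y) = fE x + fE y := by
  simp only [fE, Zsqrtd.re_add, Zsqrtd.im_add]; push_cast; ring

lemma gE_add (x y : ℤ√2) : gE (x + y) = gE x + gE y := by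
  simp only [gE, Zsqrtd.re_add, Zsqrtd.im_add]; push_cast; ring

lemma fg_norm (x : ℤ√2) : fE x * gE x = ((x.re ^ 2 - 2 * x.im ^ 2 : ℤ) : ℝ) := by
  simp only [fE, gE]
  push_cast
  linear_combination (-(x.im : ℝ) * x.im) * s_sq

lemma pos_aux (a b : ℝ) (ha : 0 < a) (h : 2 * b ^ 2 < a ^ 2) :
    0 < a + b * Real.sqrt 2 := by
  by_contra hc
  push_neg at hc
  have hb : b * Real.sqrt 2 ≤ -a := by linarith
  have h2 : 0 < a - b * Real.sqrt 2 := by linarith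
  have h3 : (a + b * Real.sqrt 2) * (a - b * Real.sqrt 2) ≤ 0 :=
    mul_nonpos_of_nonpos_of_nonneg hc h2.le
  have h4 := s_sq
  nlinarith

lemma totpos_int (x : ℤ√2) : TotPos2 x ↔ 0 < x.re ∧ 2 * x.im ^ 2 < x.re ^ 2 := by
  constructor
  · rintro ⟨h1, h2⟩
    have ha : (0 : ℝ) < x.re := by nlinarith
    have hp : (0 : ℝ) < (x.re + x.im * Real.sqrt 2) * (x.re - x.im * Real.sqrt 2) :=
      mul_pos h1 h2
    have h4 := s_sq
    have hn : (2 : ℝ) * x.im ^ 2 < x.re ^ 2 := by nlinarith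
    exact ⟨by exact_mod_cast ha, by exact_mod_cast hn⟩
  · rintro ⟨h1, h2⟩
    have h1' : (0 : ℝ) < x.re := by exact_mod_cast h1
    have h2' : (2 : ℝ) * x.im ^ 2 < x.re ^ 2 := by exact_mod_cast h2
    constructor
    · exact pos_aux _ _ h1' h2'
    · have := pos_aux (x.re : ℝ) (-(x.im : ℝ)) h1' (by nlinarith)
      linarith [this]

lemma totpos_mul {x y : ℤ√2} (hx : TotPos2 x) (hy : TotPos2 y) : TotPos2 (x * y) := by
  rw [totPos_iff] at *
  rw [fE_mul, gE_mul]
  exact ⟨mul_pos hx.1 hy.1, mul_pos hx.2 hy.2⟩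

lemma indec_unit_mul (u v : ℤ√2) (huv : v * u = 1) (hv : TotPos2 v) (α : ℤ√2)
    (h : Indec2 α) : Indec2 (u * α) := by
  rintro ⟨β, γ, hβ, hγ, he⟩
  refine h ⟨v * β, v * γ, totpos_mul hv hβ, totpos_mul hv hγ, ?_⟩
  calc v * β + v * γ = v * (β + γ) := by ring
    _ = v * (u * α) := by rw [he]
    _ = α := by rw [← mul_assoc, huv, one_mul]

def η : (ℤ√2)ˣ := ⟨⟨1, 1⟩, ⟨-1, 1⟩, by decide, by decide⟩

lemma ηsq : ((η : ℤ√2)) ^ 2 = ⟨3, 2⟩ := by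
  rw [pow_two]; decide

lemma ηinv : ((η⁻¹ : (ℤ√2)ˣ) : ℤ√2) = ⟨-1, 1⟩ := rfl

lemma ηinvsq : ((η⁻¹ : (ℤ√2)ˣ) : ℤ√2) ^ 2 = ⟨3, -2⟩ := by
  rw [ηinv, pow_two]; decide

lemma totpos32 : TotPos2 (⟨3, 2⟩ : ℤ√2) := (totpos_int _).2 (by norm_num)
lemma totpos3m2 : TotPos2 (⟨3, -2⟩ : ℤ√2) := (totpos_int _).2 (by norm_num)

lemma key : ∀ n : ℕ, ∀ α : ℤ√2, α.re ≤ (n : ℤ) → TotPos2 α → Indec2 α →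
    ∃ ε : (ℤ√2)ˣ, α = (ε : ℤ√2) ^ 2 * 1 ∨ α = (ε : ℤ√2) ^ 2 * ⟨2, 1⟩ := by
  intro n
  induction n with
  | zero =>
    intro α hle hpos _
    have := ((totpos_int α).1 hpos).1
    omega
  | succ n ih =>
    intro α hle hpos hind
    obtain ⟨ha, hN⟩ := (totpos_int α).1 hpos
    by_cases hmin : 2 * |α.im| ≤ α.re
    · -- minimal case
      have hnd : ¬(2 ≤ α.re ∧ 2 * α.im ^ 2 < (α.re - 1) ^ 2) := by
        rintro ⟨h1, h2⟩
        refine hind ⟨1, α - 1, (totpos_int 1).2 (by norm_num), (totpos_int _).2 ?_, by ring⟩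
        simp only [Zsqrtd.re_sub, Zsqrtd.im_sub, Zsqrtd.re_one, Zsqrtd.im_one, sub_zero]
        exact ⟨by omega, h2⟩
      have habs : α.im ^ 2 = |α.im| ^ 2 := (sq_abs _).symm
      by_cases ha1 : α.re = 1
      · have hb0 : α.im = 0 := by
          have h1 : |α.im| ≤ 0 := by omega
          exact abs_eq_zero.mp (le_antisymm h1 (abs_nonneg _))
        have : α = 1 := by
          ext
          · simpa using ha1
          · simpa using hb0
        exact ⟨1, Or.inl (by simp [this])⟩
      · have ha2 : 2 ≤ α.re := by omega
        have h2b : (α.re - 1) ^ 2 ≤ 2 * α.im ^ 2 := by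
          by_contra hcc
          exact hnd ⟨ha2, by omega⟩
        have h4b : 4 * α.im ^ 2 ≤ α.re ^ 2 := by
          have : (2 * |α.im|) ^ 2 ≤ α.re ^ 2 := by
            apply sq_le_sq'
            · nlinarith [abs_nonneg α.im]
            · exact hmin
          nlinarith [habs]
        have ha3 : α.re ≤ 3 := by nlinarith
        have haval : α.re = 2 := by
          rcases (by omega : α.re = 2 ∨ α.re = 3) with h | h
          · exact h
          · exfalso
            have : 2 * |α.im| ≤ 3 := by omega
            have hb1 : |α.im| ≤ 1 := by omega
            have : α.im ^ 2 ≤ 1 := by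
              rw [habs]; nlinarith [abs_nonneg α.im]
            nlinarith
        have hb1 : |α.im| ≤ 1 := by omega
        have hbne : α.im ≠ 0 := by
          intro h0
          rw [h0] at h2b
          nlinarith
        have : α.im = 1 ∨ α.im = -1 := by
          rcases abs_le.1 hb1 with ⟨hl, hr⟩; omega
        rcases this with hb | hb
        · refine ⟨1, Or.inr ?_⟩
          have : α = ⟨2, 1⟩ := by
            ext
            · simpa using haval
            · simpa using hb
          simp [this]
        · refine ⟨η⁻¹, Or.inr ?_⟩
          have : α = ⟨2, -1⟩ := by
            ext
            · simpa using haval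
            · simpa using hb
          rw [this, ηinvsq]
          decide
    · push_neg at hmin
      have hbne : α.im ≠ 0 := by
        intro h0; rw [h0] at hmin; simp at hmin; omega
      rcases lt_or_gt_of_ne hbne with hbneg | hbpos
      · -- b < 0 : multiply by ⟨3,2⟩
        set α' : ℤ√2 := ⟨3, 2⟩ * α with hα'
        have hpos' : TotPos2 α' := totpos_mul totpos32 hpos
        have hind' : Indec2 α' := indec_unit_mul _ ⟨3, -2⟩ (by decide) totpos3m2 α hind
        have hre' : α'.re = 3 * α.re + 4 * α.im := by
          simp [hα', Zsqrtd.re_mul]; try ring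
        have habs : |α.im| = -α.im := abs_of_neg hbneg
        have hlt : α'.re < α.re := by omega
        have hpos1 : 0 < α'.re := ((totpos_int _).1 hpos').1
        obtain ⟨ε', hc⟩ := ih α' (by omega) hpos' hind'
        refine ⟨η⁻¹ * ε', ?_⟩
        have hαeq : α = ⟨3, -2⟩ * α' := by
          rw [hα', ← mul_assoc, show ((⟨3, -2⟩ : ℤ√2) * ⟨3, 2⟩) = 1 from by decide, one_mul]
        have hcoe : ((↑(η⁻¹ * ε') : ℤ√2)) ^ 2 = (⟨3, -2⟩ : ℤ√2) * ((ε' : ℤ√2)) ^ 2 := by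
          rw [Units.val_mul, mul_pow, ηinvsq]
        rcases hc with h | h
        · exact Or.inl (by rw [hαeq, h, hcoe]; ring)
        · exact Or.inr (by rw [hαeq, h, hcoe]; ring)
      · -- b > 0 : multiply by ⟨3,-2⟩
        set α' : ℤ√2 := ⟨3, -2⟩ * α with hα'
        have hpos' : TotPos2 α' := totpos_mul totpos3m2 hpos
        have hind' : Indec2 α' := indec_unit_mul _ ⟨3, 2⟩ (by decide) totpos32 α hind
        have hre' : α'.re = 3 * α.re - 4 * α.im := by
          simp [hα', Zsqrtd.re_mul]; try ring
        have habs : |α.im| = α.im := abs_of_pos hbpos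
        have hlt : α'.re < α.re := by omega
        have hpos1 : 0 < α'.re := ((totpos_int _).1 hpos').1
        obtain ⟨ε', hc⟩ := ih α' (by omega) hpos' hind'
        refine ⟨η * ε', ?_⟩
        have hαeq : α = ⟨3, 2⟩ * α' := by
          rw [hα', ← mul_assoc, show ((⟨3, 2⟩ : ℤ√2) * ⟨3, -2⟩) = 1 from by decide, one_mul]
        have hcoe : ((↑(η * ε') : ℤ√2)) ^ 2 = (⟨3, 2⟩ : ℤ√2) * ((ε' : ℤ√2)) ^ 2 := by
          rw [Units.val_mul, mul_pow, ηsq]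
        rcases hc with h | h
        · exact Or.inl (by rw [hαeq, h, hcoe]; ring)
        · exact Or.inr (by rw [hαeq, h, hcoe]; ring)

lemma totpos_unit_sq (ε : (ℤ√2)ˣ) : TotPos2 ((ε : ℤ√2) ^ 2) := by
  have hf : fE (ε : ℤ√2) * fE ((ε⁻¹ : (ℤ√2)ˣ) : ℤ√2) = 1 := by
    rw [← fE_mul, ← Units.val_mul, mul_inv_cancel]
    simp [fE]
  have hg : gE (ε : ℤ√2) * gE ((ε⁻¹ : (ℤ√2)ˣ) : ℤ√2) = 1 := by
    rw [← gE_mul, ← Units.val_mul, mul_inv_cancel]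
    simp [gE]
  have hfne : fE (ε : ℤ√2) ≠ 0 := fun h => by rw [h, zero_mul] at hf; norm_num at hf
  have hgne : gE (ε : ℤ√2) ≠ 0 := fun h => by rw [h, zero_mul] at hg; norm_num at hg
  rw [totPos_iff, pow_two, fE_mul, gE_mul]
  exact ⟨(mul_self_pos).2 hfne, (mul_self_pos).2 hgne⟩

lemma indec_one : Indec2 1 := by
  rintro ⟨β, γ, hβ, hγ, he⟩
  rw [totPos_iff] at hβ hγ
  have hf : fE β + fE γ = 1 := by rw [← fE_add, he]; simp [fE]
  have hg : gE β + gE γ = 1 := by rw [← gE_add, he]; simp [gE]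
  have h1 : fE β * gE β < 1 := by nlinarith [hβ.1, hβ.2, hγ.1, hγ.2]
  have h0 : 0 < fE β * gE β := mul_pos hβ.1 hβ.2
  rw [fg_norm] at h1 h0
  have h1' : (β.re ^ 2 - 2 * β.im ^ 2 : ℤ) < 1 := by exact_mod_cast h1
  have h0' : (0 : ℤ) < β.re ^ 2 - 2 * β.im ^ 2 := by exact_mod_cast h0
  omega

lemma indec_sq2 : Indec2 ⟨2, 1⟩ := by
  rintro ⟨β, γ, hβ, hγ, he⟩
  rw [totPos_iff] at hβ hγ
  have hf : fE β + fE γ = 2 + Real.sqrt 2 := by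
    rw [← fE_add, he]; simp [fE]
  have hg : gE β + gE γ = 2 - Real.sqrt 2 := by
    rw [← gE_add, he]; simp [gE]
  have hs := s_sq
  have nb : fE β * gE β = 1 := by
    have h1 : fE β * gE β < 2 := by nlinarith [hβ.1, hβ.2, hγ.1, hγ.2, s_pos]
    have h0 : 0 < fE β * gE β := mul_pos hβ.1 hβ.2
    rw [fg_norm] at h1 h0 ⊢
    have h1' : (β.re ^ 2 - 2 * β.im ^ 2 : ℤ) < 2 := by exact_mod_cast h1
    have h0' : (0 : ℤ) < β.re ^ 2 - 2 * β.im ^ 2 := by exact_mod_cast h0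
    have : (β.re ^ 2 - 2 * β.im ^ 2 : ℤ) = 1 := by omega
    rw [this]; norm_num
  have nc : fE γ * gE γ = 1 := by
    have h1 : fE γ * gE γ < 2 := by nlinarith [hβ.1, hβ.2, hγ.1, hγ.2, s_pos]
    have h0 : 0 < fE γ * gE γ := mul_pos hγ.1 hγ.2
    rw [fg_norm] at h1 h0 ⊢
    have h1' : (γ.re ^ 2 - 2 * γ.im ^ 2 : ℤ) < 2 := by exact_mod_cast h1
    have h0' : (0 : ℤ) < γ.re ^ 2 - 2 * γ.im ^ 2 := by exact_mod_cast h0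
    have : (γ.re ^ 2 - 2 * γ.im ^ 2 : ℤ) = 1 := by omega
    rw [this]; norm_num
  -- gE β < 2 - √2 and gE γ < 2 - √2, so fE β (2-√2) > 1, fE γ (2-√2) > 1
  have hgb : gE β < 2 - Real.sqrt 2 := by linarith [hγ.2]
  have hgc : gE γ < 2 - Real.sqrt 2 := by linarith [hβ.2]
  nlinarith [mul_lt_mul_of_pos_left hgb hβ.1, mul_lt_mul_of_pos_left hgc hγ.1, s_pos]

lemma indec_transport (ε : (ℤ√2)ˣ) (c : ℤ√2) (hc : Indec2 c) :
    Indec2 ((ε : ℤ√2) ^ 2 * c) := by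
  rintro ⟨β, γ, hβ, hγ, he⟩
  refine hc ⟨((ε⁻¹ : (ℤ√2)ˣ) : ℤ√2) ^ 2 * β, ((ε⁻¹ : (ℤ√2)ˣ) : ℤ√2) ^ 2 * γ,
    totpos_mul (totpos_unit_sq ε⁻¹) hβ, totpos_mul (totpos_unit_sq ε⁻¹) hγ, ?_⟩
  have hco : ((ε⁻¹ : (ℤ√2)ˣ) : ℤ√2) ^ 2 * ((ε : ℤ√2) ^ 2 * c) = c := by
    rw [← mul_assoc, ← mul_pow, ← Units.val_mul, inv_mul_cancel]
    simp
  calc ((ε⁻¹ : (ℤ√2)ˣ) : ℤ√2) ^ 2 * β + ((ε⁻¹ : (ℤ√2)ˣ) : ℤ√2) ^ 2 * γ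
      = ((ε⁻¹ : (ℤ√2)ˣ) : ℤ√2) ^ 2 * (β + γ) := by ring
    _ = c := by rw [he, hco]

end Stmt19Aux

open Stmt19Aux in
/-- Up to multiplication by squares of units, the only indecomposable totally
positive elements of `ℤ[√2]` are `1` and `2 + √2`. -/
theorem stmt19 (α : ℤ√2) (hα : TotPos2 α) :
    Indec2 α ↔ ∃ ε : (ℤ√2)ˣ,
      α = (ε : ℤ√2) ^ 2 * 1 ∨ α = (ε : ℤ√2) ^ 2 * ⟨2, 1⟩ := by
  constructor
  · intro h
    exact key α.re.toNat α (Int.self_le_toNat _) hα h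
  · rintro ⟨ε, h | h⟩
    · rw [h]
      exact indec_transport ε 1 indec_one
    · rw [h]
      exact indec_transport ε ⟨2, 1⟩ indec_sq2
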